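/- arXiv:1502.01232 — 2 statements merged into one kernel-verified Lean document; each statement's English description precedes it below -/
import Mathlib

section
/- Let (P, Theta-hat) be a Real principal U(m)-bundle over (X, tau) with an equivariant connection. For a loop gamma-tilde based at x_0, let hol_{gamma-tilde}(p) in U(m) be defined by PT_{gamma-tilde}(p) = p * hol_{gamma-tilde}(p). Then hol_{tau(gamma-tilde)}(Theta-hat(p)) = conj(hol_{gamma-tilde}(p)). In particular, if gamma-tilde lies in the fixed-point set of tau and p is a fixed point of Theta-hat, then hol_{gamma-tilde}(p) lies in the orthogonal group O(m) ⊂ U(m). -/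
open Matrix

/-- Holonomy of a Real principal `U(m)`-bundle with equivariant connection: `act` is the
right `U(m)`-action on the total space `P`, `ΘP` the Real structure (satisfying
`ΘP(p·u) = ΘP(p)·conj(u)`), `PT` the parallel transport of an equivariant connection
(`PT_{τ∘γ} ∘ ΘP = ΘP ∘ PT_γ`), and `hol` the holonomy defined by
`PT_γ(p) = p · hol_γ(p)`; the action is free on fibers.  Then
`hol_{τ∘γ}(ΘP p) = conj(hol_γ p)`; in particular for a loop in the fixed-point set and a
fixed point `p` of `ΘP`, the holonomy equals its own conjugate, i.e. lies in
`O(m) ⊂ U(m)`. -/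
theorem stmt14 (m : ℕ) {X P : Type*} (τ : X → X) (ΘP : P → P)
    (act : P → Matrix (Fin m) (Fin m) ℂ → P)
    (PT : (unitInterval → X) → P → P)
    (hol : (unitInterval → X) → P → Matrix (Fin m) (Fin m) ℂ)
    (hΘact : ∀ (p : P) (u : Matrix (Fin m) (Fin m) ℂ),
      ΘP (act p u) = act (ΘP p) (u.map (starRingEnd ℂ)))
    (hPTequiv : ∀ (γt : unitInterval → X) (p : P),
      PT (τ ∘ γt) (ΘP p) = ΘP (PT γt p))
    (hhol : ∀ (γt : unitInterval → X) (p : P), PT γt p = act p (hol γt p))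
    (hfree : ∀ (p : P) (u v : Matrix (Fin m) (Fin m) ℂ), act p u = act p v → u = v) :
    (∀ (γt : unitInterval → X) (p : P), γt 0 = γt 1 →
      hol (τ ∘ γt) (ΘP p) = (hol γt p).map (starRingEnd ℂ)) ∧
    (∀ (γt : unitInterval → X) (p : P), γt 0 = γt 1 →
      τ ∘ γt = γt → ΘP p = p →
      (hol γt p).map (starRingEnd ℂ) = hol γt p) := by
  have main : ∀ (γt : unitInterval → X) (p : P),
      hol (τ ∘ γt) (ΘP p) = (hol γt p).map (starRingEnd ℂ) := by
    intro γt p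
    apply hfree (ΘP p)
    rw [← hhol, hPTequiv, hhol, hΘact]
  refine ⟨fun γt p _ => main γt p, fun γt p _ hτ hp => ?_⟩
  have := main γt p
  rw [hτ, hp] at this
  exact this.symm
end

section
/- Consider the family of generalized harmonic oscillator eigenfunctions psi_n^{(x)}(r) = C_n * nu(x)^{1/4} * H_n(r * nu(x)^{1/2}) * exp(-(r^2/2)(nu(x) + i*phi(x))) depending on smooth real parameters nu(x) > 0 and phi(x). Then the Berry connection coefficient satisfies <psi_n^{(x)}, ∂_{x_j} psi_n^{(x)}> = -i * ((2n+1)/4) * (1/nu(x)) * ∂phi/∂x_j, using the Hermite function identities ∫ y^2 H_n(y)^2 e^{-y^2} dy = (n + 1/2) C_n^{-2} and ∫ y H_n(y) H_n'(y) e^{-y^2} dy = n C_n^{-2}. -/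
open MeasureTheory

/-- The `n`-th (physicists') Hermite polynomial `H_n(r) = (-1)^n e^{r²} (d/dr)^n e^{-r²}`. -/
noncomputable def physHermite (n : ℕ) (r : ℝ) : ℝ :=
  (-1) ^ n * Real.exp (r ^ 2) * iteratedDeriv n (fun y => Real.exp (-(y ^ 2))) r

/-- The normalization constant `C_n = (n! 2^n √π)^{-1/2}`. -/
noncomputable def Cnorm (n : ℕ) : ℝ :=
  (Real.sqrt ((n.factorial : ℝ) * 2 ^ n * Real.sqrt Real.pi))⁻¹

/-- The eigenfunctions of the generalized harmonic oscillator,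
`ψ_n(r) = C_n ν^{1/4} H_n(r ν^{1/2}) exp(-(r²/2)(ν + iφ))`. -/
noncomputable def psiHO (n : ℕ) (ν φ r : ℝ) : ℂ :=
  (Cnorm n : ℂ) * ((ν ^ ((1 : ℝ) / 4) : ℝ) : ℂ)
    * ((physHermite n (r * Real.sqrt ν) : ℝ) : ℂ)
    * Complex.exp (-((r : ℂ) ^ 2 / 2) * ((ν : ℂ) + Complex.I * (φ : ℂ)))

open Polynomial Real Filter Set

noncomputable def Hpoly : ℕ → Polynomial ℝ
  | 0 => 1
  | n+1 => 2 * Polynomial.X * Hpoly n - (Hpoly n).derivative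

lemma iteratedDeriv_gaussian (n : ℕ) :
    iteratedDeriv n (fun y : ℝ => Real.exp (-(y ^ 2)))
      = fun y => (-1) ^ n * (Hpoly n).eval y * Real.exp (-(y ^ 2)) := by
  induction n with
  | zero => simp [Hpoly]
  | succ n ih =>
    rw [iteratedDeriv_succ, ih]
    funext y
    have hg : HasDerivAt (fun y : ℝ => Real.exp (-(y ^ 2)))
        (Real.exp (-(y ^ 2)) * (-(2 * y))) y := by
      have := ((hasDerivAt_pow 2 y).neg).exp
      simpa using this
    have h : HasDerivAt (fun y : ℝ => (-1 : ℝ) ^ n * (Hpoly n).eval y * Real.exp (-(y ^ 2)))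
        ((-1 : ℝ) ^ n * (Hpoly n).derivative.eval y * Real.exp (-(y ^ 2))
          + (-1 : ℝ) ^ n * (Hpoly n).eval y * (Real.exp (-(y ^ 2)) * (-(2 * y)))) y :=
      (((Hpoly n).hasDerivAt y).const_mul ((-1 : ℝ) ^ n)).mul hg
    rw [h.deriv]
    simp only [Hpoly, Polynomial.eval_sub, Polynomial.eval_mul, Polynomial.eval_ofNat,
      Polynomial.eval_X, pow_succ]
    ring

lemma physHermite' (n : ℕ) (r : ℝ) :
    (-1 : ℝ) ^ n * Real.exp (r ^ 2) * iteratedDeriv n (fun y => Real.exp (-(y ^ 2))) r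
      = (Hpoly n).eval r := by
  rw [iteratedDeriv_gaussian]
  have h1 : Real.exp (r ^ 2) * Real.exp (-(r ^ 2)) = 1 := by
    rw [← Real.exp_add]; simp
  have h2 : ((-1 : ℝ) ^ n) * ((-1 : ℝ) ^ n) = 1 := by
    rw [← pow_add]; exact Even.neg_one_pow ⟨n, rfl⟩
  calc (-1:ℝ) ^ n * Real.exp (r ^ 2) * ((-1) ^ n * (Hpoly n).eval r * Real.exp (-(r ^ 2)))
      = ((-1:ℝ) ^ n * (-1) ^ n) * (Real.exp (r ^ 2) * Real.exp (-(r ^ 2))) * (Hpoly n).eval r := by ring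
    _ = (Hpoly n).eval r := by rw [h1, h2]; ring

lemma physHermite_eval (n : ℕ) (r : ℝ) : physHermite n r = (Hpoly n).eval r := by
  rw [physHermite]; exact physHermite' n r

lemma physHermite_hasDerivAt (n : ℕ) (z : ℝ) :
    HasDerivAt (physHermite n) (deriv (physHermite n) z) z := by
  have h : physHermite n = fun y => (Hpoly n).eval y := funext (physHermite_eval n)
  rw [h]
  exact ((Hpoly n).hasDerivAt z).deriv ▸ (Hpoly n).hasDerivAt z

lemma deriv_physHermite (n : ℕ) (z : ℝ) :
    deriv (physHermite n) z = (Hpoly n).derivative.eval z := by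
  have h : physHermite n = fun y => (Hpoly n).eval y := funext (physHermite_eval n)
  rw [h]
  exact ((Hpoly n).hasDerivAt z).deriv

lemma Cnorm_pos (n : ℕ) : 0 < Cnorm n := by
  unfold Cnorm
  have h1 : (0:ℝ) < (n.factorial : ℝ) := by exact_mod_cast n.factorial_pos
  have h2 : (0:ℝ) < Real.sqrt Real.pi := Real.sqrt_pos.mpr Real.pi_pos
  positivity

lemma integrable_pow_gauss (k : ℕ) :
    Integrable fun y : ℝ => y ^ k * Real.exp (-(y ^ 2)) := by
  have h : (-1 : ℝ) < (k : ℝ) := neg_one_lt_zero.trans_le (Nat.cast_nonneg k)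
  have := integrable_rpow_mul_exp_neg_mul_sq (b := 1) one_pos h
  simpa [Real.rpow_natCast, neg_mul, one_mul] using this

lemma integrable_poly_gauss (Q : ℝ[X]) :
    Integrable fun y : ℝ => Q.eval y * Real.exp (-(y ^ 2)) := by
  induction Q using Polynomial.induction_on' with
  | add p q hp hq => simpa [add_mul, Pi.add_def] using hp.add hq
  | monomial k a =>
      simpa [Polynomial.eval_monomial, mul_assoc] using (integrable_pow_gauss k).const_mul a

lemma tendsto_poly_gauss (Q : ℝ[X]) :
    Tendsto (fun y : ℝ => Q.eval y * Real.exp (-(y ^ 2))) atTop (nhds 0) := by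
  set d := Q.natDegree with hd
  set C := ∑ i ∈ Finset.range (d + 1), |Q.coeff i| with hC
  have hbound : ∀ᶠ y in atTop, ‖Q.eval y * Real.exp (-(y ^ 2))‖
      ≤ C * ((y ^ 2) ^ d * Real.exp (-(y ^ 2))) := by
    filter_upwards [eventually_ge_atTop (1 : ℝ)] with y hy
    have hy0 : (0:ℝ) ≤ y := by linarith
    rw [norm_mul, Real.norm_eq_abs, Real.norm_eq_abs, abs_of_pos (Real.exp_pos _),
      ← mul_assoc]
    apply mul_le_mul_of_nonneg_right _ (Real.exp_pos _).le
    have h1 : |Q.eval y| ≤ ∑ i ∈ Finset.range (d + 1), |Q.coeff i| * y ^ i := by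
      rw [Polynomial.eval_eq_sum_range]
      refine (Finset.abs_sum_le_sum_abs _ _).trans ?_
      apply Finset.sum_le_sum
      intro i _
      rw [abs_mul, abs_pow, abs_of_nonneg hy0]
    refine h1.trans ?_
    rw [← pow_mul, Finset.sum_mul]
    apply Finset.sum_le_sum
    intro i hi
    have : |Q.coeff i| * y ^ i ≤ |Q.coeff i| * y ^ (d * 2) := by
      apply mul_le_mul_of_nonneg_left _ (abs_nonneg _)
      apply pow_le_pow_right₀ hy
      have := Finset.mem_range.1 hi
      omega
    simpa [mul_comm] using this
  have hlim : Tendsto (fun y : ℝ => C * ((y ^ 2) ^ d * Real.exp (-(y ^ 2)))) atTop (nhds 0) := by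
    have h1 : Tendsto (fun t : ℝ => t ^ d * Real.exp (-t)) atTop (nhds 0) :=
      tendsto_pow_mul_exp_neg_atTop_nhds_zero d
    have h2 : Tendsto (fun y : ℝ => y ^ 2) atTop atTop :=
      tendsto_pow_atTop (by norm_num)
    simpa using (h1.comp h2).const_mul C
  exact squeeze_zero_norm' hbound hlim

lemma tendsto_poly_gauss_atBot (Q : ℝ[X]) :
    Tendsto (fun y : ℝ => Q.eval y * Real.exp (-(y ^ 2))) atBot (nhds 0) := by
  have h := (tendsto_poly_gauss (Q.comp (-Polynomial.X))).comp tendsto_neg_atBot_atTop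
  refine h.congr fun y => ?_
  simp [Function.comp, Polynomial.eval_comp]

lemma integral_deriv_poly_gauss (R : ℝ[X]) :
    ∫ y : ℝ, (R.derivative.eval y - 2 * y * R.eval y) * Real.exp (-(y ^ 2)) = 0 := by
  set W : ℝ[X] := R.derivative - 2 * Polynomial.X * R with hW
  set w : ℝ → ℝ := fun y => (R.derivative.eval y - 2 * y * R.eval y) * Real.exp (-(y ^ 2)) with hw
  set h : ℝ → ℝ := fun y => R.eval y * Real.exp (-(y ^ 2)) with hh
  have hweq : w = fun y => W.eval y * Real.exp (-(y ^ 2)) := by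
    funext y; simp [hw, hW]
  have hderiv : ∀ y : ℝ, HasDerivAt h (w y) y := by
    intro y
    have hg : HasDerivAt (fun y : ℝ => Real.exp (-(y ^ 2)))
        (Real.exp (-(y ^ 2)) * (-(2 * y))) y := by
      simpa using ((hasDerivAt_pow 2 y).neg).exp
    have := (R.hasDerivAt y).mul hg
    refine this.congr_deriv ?_
    simp [hw]; ring
  have hint : Integrable w := by rw [hweq]; exact integrable_poly_gauss W
  have htop : Tendsto h atTop (nhds 0) := tendsto_poly_gauss R
  have hIoi : ∫ y in Ioi (0:ℝ), w y = 0 - h 0 :=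
    integral_Ioi_of_hasDerivAt_of_tendsto' (fun y _ => hderiv y) hint.integrableOn htop
  have hIic : ∫ y in Iic (0:ℝ), w y = h 0 - 0 := by
    have hk : ∀ x : ℝ, HasDerivAt (fun x : ℝ => -h (-x)) (w (-x)) x := by
      intro x
      have h1 : HasDerivAt (fun x : ℝ => h (-x)) (w (-x) * (-1)) x :=
        (hderiv (-x)).comp x (hasDerivAt_neg x)
      simpa [Pi.neg_def] using h1.neg
    have hkint : IntegrableOn (fun x : ℝ => w (-x)) (Ioi (0:ℝ)) := by
      have : Integrable (fun x : ℝ => w (-x)) := by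
        rw [hweq]
        have := integrable_poly_gauss (W.comp (-Polynomial.X))
        refine this.congr ?_
        filter_upwards with x
        simp [Polynomial.eval_comp]
      exact this.integrableOn
    have hktop : Tendsto (fun x : ℝ => -h (-x)) atTop (nhds 0) := by
      have h2 := ((tendsto_poly_gauss_atBot R).comp tendsto_neg_atTop_atBot).neg
      rw [neg_zero] at h2
      refine h2.congr fun x => ?_
      simp [hh, Function.comp]
    have := integral_Ioi_of_hasDerivAt_of_tendsto' (f := fun x : ℝ => -h (-x))
      (fun x _ => hk x) hkint hktop
    rw [integral_comp_neg_Ioi] at this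
    simpa using this
  have := intervalIntegral.integral_Iic_add_Ioi (b := (0:ℝ)) hint.integrableOn hint.integrableOn
  rw [hIic, hIoi] at this
  rw [← this]; ring

lemma psi_hasDerivAt (n : ℕ) (ν φ ν' φ' r : ℝ) (hν : 0 < ν) :
    HasDerivAt (fun s : ℝ => psiHO n (ν + s * ν') (φ + s * φ') r)
      ((Cnorm n : ℂ) * ((1/4 * ν ^ ((1:ℝ)/4 - 1) * ν' : ℝ) : ℂ)
          * ((physHermite n (r * Real.sqrt ν) : ℝ) : ℂ)
          * Complex.exp (-((r:ℂ)^2/2) * ((ν:ℂ) + Complex.I * (φ:ℂ)))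
        + (Cnorm n : ℂ) * ((ν ^ ((1:ℝ)/4) : ℝ) : ℂ)
          * ((deriv (physHermite n) (r * Real.sqrt ν) * (r * (1/(2*Real.sqrt ν) * ν')) : ℝ) : ℂ)
          * Complex.exp (-((r:ℂ)^2/2) * ((ν:ℂ) + Complex.I * (φ:ℂ)))
        + (Cnorm n : ℂ) * ((ν ^ ((1:ℝ)/4) : ℝ) : ℂ) * ((physHermite n (r * Real.sqrt ν) : ℝ) : ℂ)
          * (Complex.exp (-((r:ℂ)^2/2) * ((ν:ℂ) + Complex.I * (φ:ℂ)))
             * (-((r:ℂ)^2/2) * ((ν':ℂ) + Complex.I * (φ':ℂ))))) 0 := by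
  have hA : HasDerivAt (fun s : ℝ => ν + s * ν') ν' 0 := by
    simpa using (hasDerivAt_mul_const ν').const_add ν
  have hB : HasDerivAt (fun s : ℝ => φ + s * φ') φ' 0 := by
    simpa using (hasDerivAt_mul_const φ').const_add φ
  have key : HasDerivAt (fun s : ℝ => (ν + s * ν') ^ ((1:ℝ)/4))
      (1/4 * ν ^ ((1:ℝ)/4 - 1) * ν') 0 := by
    have hg : HasDerivAt (fun x : ℝ => x ^ ((1:ℝ)/4)) ((1:ℝ)/4 * ν ^ ((1:ℝ)/4 - 1))
        (ν + 0 * ν') := by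
      simpa using Real.hasDerivAt_rpow_const (x := ν) (p := (1:ℝ)/4) (Or.inl hν.ne')
    have := hg.comp 0 hA
    simpa [Function.comp_def, mul_assoc] using this
  have hsq : HasDerivAt (fun s : ℝ => Real.sqrt (ν + s * ν')) (1/(2*Real.sqrt ν) * ν') 0 := by
    have hg : HasDerivAt Real.sqrt (1/(2*Real.sqrt ν)) (ν + 0 * ν') := by
      simpa using Real.hasDerivAt_sqrt hν.ne'
    have := hg.comp 0 hA
    simpa [Function.comp_def] using this
  have hH : HasDerivAt (fun s : ℝ => physHermite n (r * Real.sqrt (ν + s * ν')))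
      (deriv (physHermite n) (r * Real.sqrt ν) * (r * (1/(2*Real.sqrt ν) * ν'))) 0 := by
    have hinner : HasDerivAt (fun s : ℝ => r * Real.sqrt (ν + s * ν'))
        (r * (1/(2*Real.sqrt ν) * ν')) 0 := hsq.const_mul r
    have hg : HasDerivAt (physHermite n)
        (deriv (physHermite n) (r * Real.sqrt ν)) (r * Real.sqrt (ν + 0 * ν')) := by
      simpa using physHermite_hasDerivAt n (r * Real.sqrt ν)
    have := hg.comp 0 hinner
    simpa [Function.comp_def] using this
  have hexp : HasDerivAt
      (fun s : ℝ => Complex.exp (-((r:ℂ)^2/2) * (((ν + s * ν' : ℝ) : ℂ)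
        + Complex.I * ((φ + s * φ' : ℝ) : ℂ))))
      (Complex.exp (-((r:ℂ)^2/2) * ((ν:ℂ) + Complex.I * (φ:ℂ)))
        * (-((r:ℂ)^2/2) * ((ν':ℂ) + Complex.I * (φ':ℂ)))) 0 := by
    have hlin : HasDerivAt (fun s : ℝ => ((ν + s * ν' : ℝ) : ℂ)
        + Complex.I * ((φ + s * φ' : ℝ) : ℂ)) ((ν':ℂ) + Complex.I * (φ':ℂ)) 0 :=
      hA.ofReal_comp.add (hB.ofReal_comp.const_mul Complex.I)
    have harg := hlin.const_mul (-((r:ℂ)^2/2))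
    have := harg.cexp
    simpa using this
  have H := (((key.ofReal_comp.const_mul ((Cnorm n : ℝ) : ℂ)).mul hH.ofReal_comp).mul hexp)
  simp only [Pi.mul_def] at H
  simp only [psiHO]
  refine H.congr_deriv ?_
  simp only [zero_mul, add_zero]
  push_cast
  ring

lemma psi_conj (n : ℕ) (ν φ r : ℝ) :
    (starRingEnd ℂ) (psiHO n ν φ r)
      = (Cnorm n : ℂ) * ((ν ^ ((1 : ℝ) / 4) : ℝ) : ℂ)
        * ((physHermite n (r * Real.sqrt ν) : ℝ) : ℂ)
        * Complex.exp (-((r : ℂ) ^ 2 / 2) * ((ν : ℂ) - Complex.I * (φ : ℂ))) := by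
  simp only [psiHO, map_mul, Complex.conj_ofReal, ← Complex.exp_conj]
  congr 2
  simp [map_mul, map_neg, map_div₀, map_ofNat, Complex.conj_ofReal, Complex.conj_I]
  tauto

noncomputable def Gfun (n : ℕ) (ν ν' φ' : ℝ) (y : ℝ) : ℂ :=
  (((Cnorm n)^2 * Real.sqrt ν * (ν'/(4*ν)) * ((physHermite n y)^2 * Real.exp (-(y^2))) : ℝ) : ℂ)
  + (((Cnorm n)^2 * Real.sqrt ν * (ν'/(2*ν))
      * (y * physHermite n y * deriv (physHermite n) y * Real.exp (-(y^2))) : ℝ) : ℂ)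
  + (-((ν':ℂ) + Complex.I * (φ':ℂ)) * (((Cnorm n)^2 * Real.sqrt ν / (2*ν) : ℝ) : ℂ))
      * ((y^2 * (physHermite n y)^2 * Real.exp (-(y^2)) : ℝ) : ℂ)

set_option maxHeartbeats 2000000 in
lemma pointwise (n : ℕ) (ν φ ν' φ' r : ℝ) (hν : 0 < ν) :
    (starRingEnd ℂ) (psiHO n ν φ r)
      * ((Cnorm n : ℂ) * ((1/4 * ν ^ ((1:ℝ)/4 - 1) * ν' : ℝ) : ℂ)
          * ((physHermite n (r * Real.sqrt ν) : ℝ) : ℂ)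
          * Complex.exp (-((r:ℂ)^2/2) * ((ν:ℂ) + Complex.I * (φ:ℂ)))
        + (Cnorm n : ℂ) * ((ν ^ ((1:ℝ)/4) : ℝ) : ℂ)
          * ((deriv (physHermite n) (r * Real.sqrt ν) * (r * (1/(2*Real.sqrt ν) * ν')) : ℝ) : ℂ)
          * Complex.exp (-((r:ℂ)^2/2) * ((ν:ℂ) + Complex.I * (φ:ℂ)))
        + (Cnorm n : ℂ) * ((ν ^ ((1:ℝ)/4) : ℝ) : ℂ) * ((physHermite n (r * Real.sqrt ν) : ℝ) : ℂ)
          * (Complex.exp (-((r:ℂ)^2/2) * ((ν:ℂ) + Complex.I * (φ:ℂ)))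
             * (-((r:ℂ)^2/2) * ((ν':ℂ) + Complex.I * (φ':ℂ)))))
      = Gfun n ν ν' φ' (Real.sqrt ν * r) := by
  rw [psi_conj, Gfun]
  have hd1 : ν ^ ((1:ℝ)/4 - 1) = (ν ^ ((1:ℝ)/4)) / ν := by
    rw [Real.rpow_sub hν, Real.rpow_one]
  rw [hd1]
  set b := Real.sqrt ν with hbdef
  set u := ν ^ ((1:ℝ)/4) with hudef
  have hb : 0 < b := Real.sqrt_pos.mpr hν
  have hb2 : b^2 = ν := Real.sq_sqrt hν.le
  have hu0 : 0 < u := Real.rpow_pos_of_pos hν _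
  have hu2 : u^2 = b := by
    rw [hudef, hbdef, Real.sqrt_eq_rpow, ← Real.rpow_natCast (ν ^ ((1:ℝ)/4)) 2,
      ← Real.rpow_mul hν.le]
    norm_num
  rw [show b * r = r * b from mul_comm b r]
  set E2 := Complex.exp (-((r:ℂ)^2/2) * ((ν:ℂ) + Complex.I * (φ:ℂ))) with hE2def
  set E1 := Complex.exp (-((r:ℂ)^2/2) * ((ν:ℂ) - Complex.I * (φ:ℂ))) with hE1def
  have hbC : (b:ℂ)^2 = (ν:ℂ) := by exact_mod_cast congrArg Complex.ofReal hb2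
  have hEE : E1 * E2 = Complex.exp (-((r:ℂ)*(b:ℂ))^2) := by
    rw [hE1def, hE2def, ← Complex.exp_add]
    congr 1
    linear_combination ((r:ℂ)^2) * hbC
  push_cast
  rw [← hEE]
  have hsC : (b:ℂ) = (u:ℂ)^2 := by exact_mod_cast congrArg Complex.ofReal hu2.symm
  have hνC : (ν:ℂ) = (u:ℂ)^4 := by
    have : ν = u^4 := by rw [← hb2, ← hu2]; ring
    exact_mod_cast congrArg Complex.ofReal this
  rw [hsC, hνC]
  have huC : (u:ℂ) ≠ 0 := by exact_mod_cast hu0.ne'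
  field_simp [huC]

lemma integrable_f1 (n : ℕ) :
    Integrable fun y : ℝ => (physHermite n y)^2 * Real.exp (-(y^2)) :=
  (integrable_poly_gauss ((Hpoly n)^2)).congr (by
    filter_upwards with y; simp [physHermite_eval])

lemma integrable_f2 (n : ℕ) :
    Integrable fun y : ℝ =>
      y * physHermite n y * deriv (physHermite n) y * Real.exp (-(y^2)) :=
  (integrable_poly_gauss (Polynomial.X * Hpoly n * (Hpoly n).derivative)).congr (by
    filter_upwards with y; simp [physHermite_eval, deriv_physHermite])

lemma integrable_f3 (n : ℕ) :
    Integrable fun y : ℝ => y^2 * (physHermite n y)^2 * Real.exp (-(y^2)) :=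
  (integrable_poly_gauss (Polynomial.X^2 * (Hpoly n)^2)).congr (by
    filter_upwards with y; simp [physHermite_eval])

lemma norm_gauss (n : ℕ) :
    ∫ y : ℝ, (physHermite n y)^2 * Real.exp (-(y^2))
      = 2 * (∫ y : ℝ, y^2 * (physHermite n y)^2 * Real.exp (-(y^2)))
        - 2 * ∫ y : ℝ, y * physHermite n y * deriv (physHermite n) y * Real.exp (-(y^2)) := by
  have h0 := integral_deriv_poly_gauss (Polynomial.X * (Hpoly n)^2)
  have hfun : (fun y : ℝ => ((Polynomial.X * (Hpoly n)^2).derivative.eval y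
        - 2 * y * (Polynomial.X * (Hpoly n)^2).eval y) * Real.exp (-(y^2)))
      = fun y : ℝ => ((physHermite n y)^2 * Real.exp (-(y^2))
          + 2 * (y * physHermite n y * deriv (physHermite n) y * Real.exp (-(y^2)))
          - 2 * (y^2 * (physHermite n y)^2 * Real.exp (-(y^2)))) := by
    funext y
    simp [physHermite_eval, deriv_physHermite, Polynomial.derivative_mul, Polynomial.derivative_pow]
    ring
  rw [hfun] at h0
  have hI2 : Integrable (fun y : ℝ =>
      2 * (y * physHermite n y * deriv (physHermite n) y * Real.exp (-(y^2)))) :=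
    (integrable_f2 n).const_mul 2
  have hI3 : Integrable (fun y : ℝ => 2 * (y^2 * (physHermite n y)^2 * Real.exp (-(y^2)))) :=
    (integrable_f3 n).const_mul 2
  have hI12 : Integrable (fun y : ℝ => (physHermite n y)^2 * Real.exp (-(y^2))
      + 2 * (y * physHermite n y * deriv (physHermite n) y * Real.exp (-(y^2)))) :=
    (integrable_f1 n).add hI2
  rw [integral_sub hI12 hI3, integral_add (integrable_f1 n) hI2,
    integral_const_mul, integral_const_mul] at h0
  linarith

/-- The Berry connection coefficient of the generalized harmonic oscillator:
with `ν' = ∂_{x_j}ν` and `φ' = ∂_{x_j}φ`, one has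
`⟨ψ_n, ∂_{x_j}ψ_n⟩ = -i (2n+1)/4 · (1/ν) · ∂_{x_j}φ`, using the Hermite identities
`∫ y² H_n(y)² e^{-y²} dy = (n + 1/2) C_n⁻²` and `∫ y H_n(y) H_n'(y) e^{-y²} dy = n C_n⁻²`. -/
theorem stmt19 (n : ℕ) (ν φ ν' φ' : ℝ) (hν : 0 < ν)
    (hint1 : ∫ y : ℝ, y ^ 2 * (physHermite n y) ^ 2 * Real.exp (-(y ^ 2))
      = ((n : ℝ) + 1 / 2) * ((Cnorm n)⁻¹) ^ 2)
    (hint2 : ∫ y : ℝ, y * physHermite n y * deriv (physHermite n) y * Real.exp (-(y ^ 2))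
      = (n : ℝ) * ((Cnorm n)⁻¹) ^ 2) :
    ∫ r : ℝ, (starRingEnd ℂ) (psiHO n ν φ r)
        * deriv (fun s : ℝ => psiHO n (ν + s * ν') (φ + s * φ') r) 0
      = -Complex.I * ((2 * (n : ℂ) + 1) / 4) * (1 / (ν : ℂ)) * (φ' : ℂ) := by
  have hb : 0 < Real.sqrt ν := Real.sqrt_pos.mpr hν
  have hK : 0 < Cnorm n := Cnorm_pos n
  have hNorm : ∫ y : ℝ, (physHermite n y)^2 * Real.exp (-(y^2)) = ((Cnorm n)⁻¹)^2 := by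
    rw [norm_gauss n, hint1, hint2]; ring
  have hfeq : (fun r : ℝ => (starRingEnd ℂ) (psiHO n ν φ r)
        * deriv (fun s : ℝ => psiHO n (ν + s * ν') (φ + s * φ') r) 0)
      = fun r : ℝ => Gfun n ν ν' φ' (Real.sqrt ν * r) := by
    funext r
    rw [(psi_hasDerivAt n ν φ ν' φ' r hν).deriv]
    exact pointwise n ν φ ν' φ' r hν
  rw [hfeq, MeasureTheory.Measure.integral_comp_mul_left (Gfun n ν ν' φ') (Real.sqrt ν)]
  simp only [Gfun]
  have hJ1 : Integrable (fun y : ℝ =>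
      (((Cnorm n)^2 * Real.sqrt ν * (ν'/(4*ν)) * ((physHermite n y)^2 * Real.exp (-(y^2))) : ℝ) : ℂ)) :=
    ((integrable_f1 n).const_mul _).ofReal
  have hJ2 : Integrable (fun y : ℝ =>
      (((Cnorm n)^2 * Real.sqrt ν * (ν'/(2*ν))
        * (y * physHermite n y * deriv (physHermite n) y * Real.exp (-(y^2))) : ℝ) : ℂ)) :=
    ((integrable_f2 n).const_mul _).ofReal
  have hJ3 : Integrable (fun y : ℝ =>
      (-((ν':ℂ) + Complex.I * (φ':ℂ)) * (((Cnorm n)^2 * Real.sqrt ν / (2*ν) : ℝ) : ℂ))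
        * ((y^2 * (physHermite n y)^2 * Real.exp (-(y^2)) : ℝ) : ℂ)) :=
    ((integrable_f3 n).ofReal).const_mul _
  have hJ12 : Integrable (fun y : ℝ =>
      (((Cnorm n)^2 * Real.sqrt ν * (ν'/(4*ν)) * ((physHermite n y)^2 * Real.exp (-(y^2))) : ℝ) : ℂ)
      + (((Cnorm n)^2 * Real.sqrt ν * (ν'/(2*ν))
        * (y * physHermite n y * deriv (physHermite n) y * Real.exp (-(y^2))) : ℝ) : ℂ)) :=
    hJ1.add hJ2
  rw [integral_add hJ12 hJ3, integral_add hJ1 hJ2, integral_const_mul,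
    integral_complex_ofReal, integral_complex_ofReal, integral_complex_ofReal,
    integral_const_mul, integral_const_mul, hNorm, hint1, hint2]
  have hbne : (Real.sqrt ν : ℂ) ≠ 0 := by exact_mod_cast hb.ne'
  have hνne : (ν : ℂ) ≠ 0 := by exact_mod_cast hν.ne'
  have hKne : (Cnorm n : ℂ) ≠ 0 := by exact_mod_cast hK.ne'
  have e1 : (Cnorm n)^2 * Real.sqrt ν * (ν'/(4*ν)) * ((Cnorm n)⁻¹)^2
      = Real.sqrt ν * ν' / (4*ν) := by
    field_simp
  have e2 : (Cnorm n)^2 * Real.sqrt ν * (ν'/(2*ν)) * ((n:ℝ) * ((Cnorm n)⁻¹)^2)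
      = Real.sqrt ν * ((n:ℝ) * ν') / (2*ν) := by
    field_simp
  have e3 : (Cnorm n)^2 * Real.sqrt ν / (2*ν) * (((n:ℝ) + 1/2) * ((Cnorm n)⁻¹)^2)
      = Real.sqrt ν * ((n:ℝ) + 1/2) / (2*ν) := by
    field_simp
  rw [mul_assoc (-((ν':ℂ) + Complex.I * (φ':ℂ))), ← Complex.ofReal_mul, e3, e1, e2]
  rw [abs_inv, abs_of_pos hb]
  rw [Complex.real_smul]
  push_cast
  field_simp [hbne, hνne]
  have hB : (Real.sqrt ν : ℂ) * (ν:ℂ)^3 * ((Real.sqrt ν : ℂ))⁻¹ * (((ν:ℂ))⁻¹)^3 = 1 := by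
    field_simp
  ring
end
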